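/- Let f be a discrete Morse function on a symmetric Δ-complex X and let α ∈ X_p. Then u_f(α) and d_f(α) cannot both equal 1; i.e., it is impossible that there exist a permissible coface β ∈ X_{p+1} of α with f(α) ≥ f(β) and a permissible face γ ∈ X_{p-1} of α with f(γ) ≥ f(α). -/

import Mathlib

structure SymDelta where
  X : ℕ → Type
  act : ∀ {p q : ℕ}, (Fin (p + 1) → Fin (q + 1)) → X q → X p
  act_id : ∀ (p : ℕ) (x : X p), act id x = x
  act_comp : ∀ {p q r : ℕ} (θ : Fin (q + 1) → Fin (r + 1)) (φ : Fin (p + 1) → Fin (q + 1)),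
    Function.Injective θ → Function.Injective φ →
    ∀ x : X r, act (θ ∘ φ) x = act φ (act θ x)

namespace SymDelta

variable (D : SymDelta)

/-- `θ` glues `α` to `β`. -/
def Glues {p q : ℕ} (θ : Fin (p + 1) → Fin (q + 1)) (α : D.X p) (β : D.X q) : Prop :=
  Function.Injective θ ∧ D.act θ β = α

/-- `α` is a face of `β`. -/
def IsFace {p q : ℕ} (α : D.X p) (β : D.X q) : Prop :=
  ∃ θ : Fin (p + 1) → Fin (q + 1), D.Glues θ α β

/-- `α'` is in the symmetric orbit of `α`. -/
def InOrbit {p : ℕ} (α α' : D.X p) : Prop :=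
  ∃ ρ : Equiv.Perm (Fin (p + 1)), D.act ⇑ρ α = α'

/-- The automorphism group of a simplex. -/
def Aut {p : ℕ} (α : D.X p) : Set (Equiv.Perm (Fin (p + 1))) :=
  {ρ | D.act ⇑ρ α = α}

/-- `α` is a permissible face of `β`. -/
def Permissible {p : ℕ} (α : D.X p) (β : D.X (p + 1)) : Prop :=
  D.IsFace α β ∧
  (∀ θ θ' : Fin (p + 1) → Fin (p + 2), D.Glues θ α β → D.Glues θ' α β →
    Set.range θ = Set.range θ') ∧
  (∀ ρ : Fin (p + 1) → Fin (p + 2), D.Glues ρ α β →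
    ∃ f : D.Aut β ≃ D.Aut α,
      ∀ π : D.Aut β, ρ ∘ ⇑((f π).1) = ⇑(π.1) ∘ ρ)

end SymDelta

/-- A discrete Morse function on a symmetric Δ-complex. -/
structure DiscreteMorseFunction (D : SymDelta) where
  f : ∀ p : ℕ, D.X p → ℝ
  orbit_eq : ∀ (p : ℕ) (α α' : D.X p), D.InOrbit α α' → f p α = f p α'
  lt_of_not_permissible : ∀ (p : ℕ) (α : D.X p) (β : D.X (p + 1)),
    D.IsFace α β → ¬ D.Permissible α β → f p α < f (p + 1) β
  up_subsingleton : ∀ (p : ℕ) (α : D.X p) (β β' : D.X (p + 1)),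
    D.Permissible α β → f (p + 1) β ≤ f p α →
    D.Permissible α β' → f (p + 1) β' ≤ f p α → D.InOrbit β β'
  down_subsingleton : ∀ (p : ℕ) (α : D.X (p + 1)) (γ γ' : D.X p),
    D.Permissible γ α → f (p + 1) α ≤ f p γ →
    D.Permissible γ' α → f (p + 1) α ≤ f p γ' → D.InOrbit γ γ'

/-! If `γ < α < β` with `α` permissible in `β`, the embedding of `α` in `β` misses one vertex `m`
of `β`; the face of `β` spanned by `γ` and `m` contains `γ` and cannot lie in the orbit of `α`,
since then `α` would also be glued to `β` along a range containing `m`. Along `γ < α' < β` the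
Morse conditions then force `f α' < f β ≤ f α ≤ f γ < f α'`. -/

namespace SymDelta

variable {D : SymDelta}

lemma Glues.comp {p q r : ℕ} {θ : Fin (q + 1) → Fin (r + 1)} {φ : Fin (p + 1) → Fin (q + 1)}
    {γ : D.X p} {α : D.X q} {β : D.X r} (hθ : D.Glues θ α β) (hφ : D.Glues φ γ α) :
    D.Glues (θ ∘ φ) γ β :=
  ⟨hθ.1.comp hφ.1, by rw [D.act_comp θ φ hθ.1 hφ.1, hθ.2, hφ.2]⟩

lemma glues_symm_of_act_eq {p : ℕ} {α α' : D.X p} {ρ : Equiv.Perm (Fin (p + 1))}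
    (h : D.act ρ α = α') : D.Glues ρ.symm α α' := by
  refine ⟨ρ.symm.injective, ?_⟩
  rw [← h, ← D.act_comp ρ ρ.symm ρ.injective ρ.symm.injective, ρ.self_comp_symm, D.act_id]

lemma Permissible.exists_face_not_inOrbit {p : ℕ} {γ : D.X p} {α : D.X (p + 1)}
    {β : D.X (p + 2)} (hγα : D.IsFace γ α) (hαβ : D.Permissible α β) :
    ∃ α' : D.X (p + 1), ¬ D.InOrbit α α' ∧ D.IsFace γ α' ∧ D.IsFace α' β := by
  obtain ⟨φ, hφ⟩ := hγα
  obtain ⟨⟨θ, hθ⟩, hrange, -⟩ := hαβ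
  obtain ⟨m, hm⟩ : ∃ m, m ∉ Set.range θ := by
    by_contra! h
    simpa using Fintype.card_le_of_surjective θ h
  set θ' : Fin (p + 2) → Fin (p + 3) := Fin.cons m (θ ∘ φ)
  have hθ' : D.Glues θ' (D.act θ' β) β :=
    ⟨Fin.cons_injective_of_injective (fun hmem => hm (Set.range_comp_subset_range φ θ hmem))
      (hθ.1.comp hφ.1), rfl⟩
  refine ⟨D.act θ' β, ?_, ⟨Fin.succ, ?_⟩, θ', hθ'⟩
  · rintro ⟨ρ, hρ⟩
    have hρθ' : Set.range θ = Set.range (θ' ∘ ρ.symm) :=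
      hrange θ _ hθ (hθ'.comp (glues_symm_of_act_eq hρ))
    rw [ρ.symm.surjective.range_comp] at hρθ'
    exact hm (hρθ' ▸ ⟨0, rfl⟩)
  · refine ⟨Fin.succ_injective _, ?_⟩
    rw [← D.act_comp θ' Fin.succ hθ'.1 (Fin.succ_injective _)]
    exact (hθ.comp hφ).2

end SymDelta

namespace DiscreteMorseFunction

variable {D : SymDelta} (F : DiscreteMorseFunction D)

lemma f_lt_of_isFace_of_not_inOrbit {p : ℕ} {α α' : D.X p} {β : D.X (p + 1)}
    (hαβ : D.Permissible α β) (hβα : F.f (p + 1) β ≤ F.f p α) (hα'β : D.IsFace α' β)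
    (hα' : ¬ D.InOrbit α α') : F.f p α' < F.f (p + 1) β := by
  by_cases hperm : D.Permissible α' β
  · exact lt_of_not_ge fun hle => hα' (F.down_subsingleton p β α α' hαβ hβα hperm hle)
  · exact F.lt_of_not_permissible p α' β hα'β hperm

lemma lt_f_of_isFace_of_not_inOrbit {p : ℕ} {γ : D.X p} {α α' : D.X (p + 1)}
    (hγα : D.Permissible γ α) (hαγ : F.f (p + 1) α ≤ F.f p γ) (hγα' : D.IsFace γ α')
    (hα' : ¬ D.InOrbit α α') : F.f p γ < F.f (p + 1) α' := by
  by_cases hperm : D.Permissible γ α'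
  · exact lt_of_not_ge fun hle => hα' (F.up_subsingleton p γ α α' hγα hαγ hperm hle)
  · exact F.lt_of_not_permissible p γ α' hγα' hperm

end DiscreteMorseFunction

/-- `u_f(α)` and `d_f(α)` cannot both equal 1: there cannot simultaneously exist a
permissible coface `β` with `f(α) ≥ f(β)` and a permissible face `γ` with `f(γ) ≥ f(α)`. -/
theorem not_both_up_and_down (D : SymDelta) (F : DiscreteMorseFunction D)
    (p : ℕ) (α : D.X (p + 1)) :
    ¬ ((∃ β : D.X (p + 2), D.Permissible α β ∧ F.f (p + 2) β ≤ F.f (p + 1) α) ∧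
       (∃ γ : D.X p, D.Permissible γ α ∧ F.f (p + 1) α ≤ F.f p γ)) := by
  rintro ⟨⟨β, hαβ, hβα⟩, ⟨γ, hγα, hαγ⟩⟩
  obtain ⟨α', hα', hγα', hα'β⟩ := hαβ.exists_face_not_inOrbit hγα.1
  have hα'_lt_β := F.f_lt_of_isFace_of_not_inOrbit hαβ hβα hα'β hα'
  have hγ_lt_α' := F.lt_f_of_isFace_of_not_inOrbit hγα hαγ hγα' hα'
  linarith
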